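/- For all m, n ≥ 3, the direct product graph K_m × C_n admits a self-identifying code. -/

import Mathlib

open SimpleGraph Set

/-- Closed neighborhood of a vertex. -/
def cNbr {V : Type*} (G : SimpleGraph V) (v : V) : Set V := insert v (G.neighborSet v)

/-- `S` is a self-identifying code of `G`. -/
def IsSID {V : Type*} (G : SimpleGraph V) (S : Set V) : Prop :=
  S.Nonempty ∧ ∀ v : V, (cNbr G v ∩ S).Nonempty ∧
    (⋂ c ∈ cNbr G v ∩ S, cNbr G c) = {v}

/-- Minimum cardinality of a self-identifying code. -/
noncomputable def gammaSID {V : Type*} (G : SimpleGraph V) : ℕ :=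
  sInf {k | ∃ S : Set V, IsSID G S ∧ S.ncard = k}

/-- Direct product of the complete graph `K_m` with the path `P_n`. -/
def KmPn (m n : ℕ) : SimpleGraph (Fin m × Fin n) where
  Adj u w := u.1 ≠ w.1 ∧ ((u.2 : ℕ) + 1 = (w.2 : ℕ) ∨ (w.2 : ℕ) + 1 = (u.2 : ℕ))
  symm := ⟨fun u w h => ⟨h.1.symm, h.2.symm⟩⟩
  loopless := ⟨fun u h => h.1 rfl⟩

/-- Direct product of the complete graph `K_m` with the cycle `C_n`. -/
def KmCn (m n : ℕ) : SimpleGraph (Fin m × ZMod n) where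
  Adj u w := u.1 ≠ w.1 ∧ (u.2 + 1 = w.2 ∨ w.2 + 1 = u.2)
  symm := ⟨fun u w h => ⟨h.1.symm, h.2.symm⟩⟩
  loopless := ⟨fun u h => h.1 rfl⟩

/-! The whole vertex set is a self-identifying code of `K_m × C_n`. The intersection of `N[c]`
over `c ∈ N[v]` always contains `v`; a non-neighbour `w ≠ v` is cut out by `c = v`, and a neighbour
`w = (a', j)` of `v = (a, i)` by `c = (b, j)` with `b ∉ {a, a'}`, which lies in `N[v]` but is not
adjacent to `w` since it shares its cycle coordinate. -/

section CNbr

variable {V : Type*} {G : SimpleGraph V} {v w : V}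

lemma mem_cNbr : w ∈ cNbr G v ↔ w = v ∨ G.Adj v w := Iff.rfl

lemma self_mem_cNbr : v ∈ cNbr G v := mem_insert v _

lemma mem_cNbr_comm : w ∈ cNbr G v ↔ v ∈ cNbr G w := by
  simp only [mem_cNbr, eq_comm, G.adj_comm]

theorem isSID_univ_of_forall_ne [Nonempty V]
    (h : ∀ v w, w ≠ v → ∃ c ∈ cNbr G v, w ∉ cNbr G c) : IsSID G univ := by
  refine ⟨univ_nonempty, fun v => ⟨⟨v, self_mem_cNbr, trivial⟩, ?_⟩⟩
  ext w
  simp only [inter_univ, mem_iInter, mem_singleton_iff]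
  refine ⟨fun hw => ?_, ?_⟩
  · by_contra hne
    obtain ⟨c, hc, hwc⟩ := h v w hne
    exact hwc (hw c hc)
  · rintro rfl c hc
    exact mem_cNbr_comm.1 hc

end CNbr

section KmCn

variable {m n : ℕ}

lemma KmCn_not_adj_same_snd [Fact (1 < n)] (a b : Fin m) (i : ZMod n) :
    ¬ (KmCn m n).Adj (a, i) (b, i) := by
  rintro ⟨-, h | h⟩ <;> simp at h

lemma KmCn_exists_separating (hm : 2 < m) [Fact (1 < n)] {v w : Fin m × ZMod n} (hne : w ≠ v) :
    ∃ c ∈ cNbr (KmCn m n) v, w ∉ cNbr (KmCn m n) c := by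
  by_cases hvw : (KmCn m n).Adj v w
  · obtain ⟨b, hbv, hbw⟩ := Fin.exists_ne_and_ne_of_two_lt v.1 w.1 hm
    refine ⟨(b, w.2), Or.inr ⟨hbv.symm, hvw.2⟩, ?_⟩
    rintro (h | h)
    · exact hbw (congrArg Prod.fst h).symm
    · exact KmCn_not_adj_same_snd b w.1 w.2 h
  · exact ⟨v, self_mem_cNbr, by simp [mem_cNbr, hne, hvw]⟩

end KmCn

theorem stmt6 (m n : ℕ) (hm : 3 ≤ m) (hn : 3 ≤ n) :
    ∃ S : Set (Fin m × ZMod n), IsSID (KmCn m n) S := by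
  have : Fact (1 < n) := ⟨by omega⟩
  have : Nonempty (Fin m) := ⟨⟨0, by omega⟩⟩
  exact ⟨univ, isSID_univ_of_forall_ne fun _ _ => KmCn_exists_separating hm⟩
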